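/- For a composition σ of n into k positive parts, the distinct cyclic rotations of σ give rise to exactly the k translations p ∈ Z/n (namely p = -S_i for the partial sums S_i, 0 ≤ i < k) such that T_p(σ(x)) is again of the form σ''(x) for a rotation σ'' of σ; equivalently, the set {p ∈ Z/n : σ(x) + p = ρ(σ)(x) for some rotation ρ} equals {-S_i mod n : 0 ≤ i < k} and has exactly k elements when the S_i are distinct mod n. -/

import Mathlib

/-
The partial sums `S_b` of a composition of `n`, read in `ZMod n`, satisfy `S_{b+1} = S_b + σ_b`
cyclically in `b : Fin k`, because the last step adds up to `n ≡ 0`. Hence the partial sums of the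
rotation by `i` are `S_{b+i} - S_i`, so translating the realization of `σ` by `-S_i` gives the
realization of its `i`-th rotation. Conversely, every realization contains `x` (at `b = 0`), so a
translate `σ(x) + p` that is a realization contains `x = x + S_b + p` for some `b`, i.e. `p = -S_b`.
The `S_b` are strictly increasing and smaller than `n`, hence distinct in `ZMod n`: there are
exactly `k` such translations.
-/

def partialSum {k : ℕ} (σ : Fin k → ℕ) (b : Fin k) : ℕ :=
  ∑ j ∈ Finset.univ.filter (fun j : Fin k => j < b), σ j

/-- The `i`-th cyclic rotation of a `k`-tuple. -/
def rotC {k : ℕ} [NeZero k] (i : Fin k) (σ : Fin k → ℕ) : Fin k → ℕ :=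
  fun j => σ (j + i)

/-- Realization of a composition at a point of `ZMod n`, as a finite set. -/
def realizationF (n : ℕ) {k : ℕ} (σ : Fin k → ℕ) (x : ZMod n) : Finset (ZMod n) :=
  Finset.univ.image fun b : Fin k => x + (partialSum σ b : ℕ)

open scoped Classical

open Finset

open Fin.NatCast in
theorem Fin.apply_eq_apply_zero_of_forall_add_one {k : ℕ} [NeZero k] {α : Type*}
    {f : Fin k → α} (hf : ∀ c, f (c + 1) = f c) (b : Fin k) : f b = f 0 := by
  have hcast : ∀ t : ℕ, f t = f 0 := by
    intro t
    induction t with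
    | zero => simp
    | succ t ih => rw [Nat.cast_succ, hf, ih]
  simpa using hcast b

section PartialSum

variable {k : ℕ} (σ : Fin k → ℕ)

theorem partialSum_eq_sum_Iio (b : Fin k) : partialSum σ b = ∑ j ∈ Iio b, σ j := by
  rw [partialSum, filter_gt_eq_Iio]

@[simp]
theorem partialSum_zero [NeZero k] : partialSum σ 0 = 0 := by
  simp [partialSum_eq_sum_Iio]

theorem partialSum_add_self (c : Fin k) : partialSum σ c + σ c = ∑ j ∈ Iic c, σ j := by
  rw [partialSum_eq_sum_Iio, ← Iio_insert, sum_insert notMem_Iio_self, add_comm]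

theorem partialSum_strictMono (hpos : ∀ j, 0 < σ j) : StrictMono (partialSum σ) := by
  intro a b hab
  simp only [partialSum_eq_sum_Iio]
  exact sum_lt_sum_of_subset (Iio_subset_Iio hab.le) (mem_Iio.2 hab) notMem_Iio_self
    (hpos a) fun _ _ _ => Nat.zero_le _

theorem partialSum_lt_sum (hpos : ∀ j, 0 < σ j) (i : Fin k) : partialSum σ i < ∑ j, σ j := by
  rw [partialSum_eq_sum_Iio]
  exact sum_lt_sum_of_subset (subset_univ _) (mem_univ i) notMem_Iio_self (hpos i)
    fun _ _ _ => Nat.zero_le _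

variable {n : ℕ} {σ}

theorem natCast_partialSum_injective (hpos : ∀ j, 0 < σ j) (hsum : ∑ j, σ j = n) :
    Function.Injective fun i => (partialSum σ i : ZMod n) := by
  intro a b hab
  have hlt : ∀ i, partialSum σ i < n := hsum ▸ partialSum_lt_sum σ hpos
  apply (partialSum_strictMono σ hpos).injective
  simpa [ZMod.val_cast_of_lt (hlt _)] using congrArg ZMod.val hab

theorem natCast_partialSum_add_one [NeZero k] (hsum : ∑ j, σ j = n) (c : Fin k) :
    ((partialSum σ (c + 1) : ℕ) : ZMod n) = partialSum σ c + σ c := by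
  rw [← Nat.cast_add, partialSum_add_self]
  by_cases hc : (c : ℕ) + 1 < k
  · rw [partialSum_eq_sum_Iio, Fin.Iio_add_one_eq_Iic hc]
  · have hlast : c + 1 = 0 := by
      ext
      simp [Fin.val_add, show (c : ℕ) + 1 = k by omega]
    have huniv : Iic c = univ := eq_univ_of_forall fun j => mem_Iic.2 (Fin.le_def.2 (by omega))
    simp [hlast, huniv, hsum]

theorem natCast_partialSum_rotC [NeZero k] (hsum : ∑ j, σ j = n) (i b : Fin k) :
    ((partialSum (rotC i σ) b : ℕ) : ZMod n) = partialSum σ (b + i) - partialSum σ i := by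
  have hsum_rot : ∑ j, rotC i σ j = n :=
    hsum ▸ Fintype.sum_equiv (Equiv.addRight i) _ _ fun _ => rfl
  have hdiff := Fin.apply_eq_apply_zero_of_forall_add_one
    (f := fun b =>
      ((partialSum (rotC i σ) b : ℕ) : ZMod n) - (partialSum σ (b + i) - partialSum σ i))
    (fun c => by
      rw [natCast_partialSum_add_one hsum_rot, add_right_comm, natCast_partialSum_add_one hsum, rotC]
      ring) b
  simpa [sub_eq_zero] using hdiff

end PartialSum

section Realization

variable {n k : ℕ} {σ : Fin k → ℕ}

theorem self_mem_realizationF [NeZero k] (x : ZMod n) : x ∈ realizationF n σ x :=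
  mem_image.2 ⟨0, mem_univ _, by simp⟩

theorem image_add_neg_partialSum_realizationF [NeZero k] (hsum : ∑ j, σ j = n) (x : ZMod n)
    (i : Fin k) :
    (realizationF n σ x).image (· + -((partialSum σ i : ℕ) : ZMod n)) =
      realizationF n (rotC i σ) x := by
  ext y
  simp only [realizationF, image_image, mem_image, mem_univ, true_and, Function.comp_def,
    natCast_partialSum_rotC hsum]
  constructor
  · rintro ⟨b, rfl⟩
    exact ⟨b - i, by rw [sub_add_cancel]; ring⟩
  · rintro ⟨b, rfl⟩
    exact ⟨b + i, by ring⟩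

theorem exists_neg_partialSum_eq_of_self_mem_image_add {x p : ZMod n}
    (h : x ∈ (realizationF n σ x).image (· + p)) :
    ∃ b, -((partialSum σ b : ℕ) : ZMod n) = p := by
  obtain ⟨y, hy, hyx⟩ := mem_image.1 h
  obtain ⟨b, -, rfl⟩ := mem_image.1 hy
  exact ⟨b, by linear_combination -hyx⟩

theorem filter_image_add_eq_realizationF_rotC [NeZero n] [NeZero k]
    (hsum : ∑ j, σ j = n) (x : ZMod n) :
    (univ.filter fun p : ZMod n =>
        ∃ i : Fin k, (realizationF n σ x).image (· + p) = realizationF n (rotC i σ) x) =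
      univ.image (fun i : Fin k => -((partialSum σ i : ℕ) : ZMod n)) := by
  ext p
  simp only [mem_filter, mem_univ, true_and, mem_image]
  constructor
  · rintro ⟨i, hi⟩
    exact exists_neg_partialSum_eq_of_self_mem_image_add (hi ▸ self_mem_realizationF x)
  · rintro ⟨i, rfl⟩
    exact ⟨i, image_add_neg_partialSum_realizationF hsum x i⟩

end Realization

theorem translations_to_rotations (n k : ℕ) [NeZero n] [NeZero k]
    (σ : Fin k → ℕ) (hpos : ∀ j, 0 < σ j) (hsum : ∑ j, σ j = n) (x : ZMod n) :
    (Finset.univ.filter fun p : ZMod n =>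
        ∃ i : Fin k, (realizationF n σ x).image (· + p) = realizationF n (rotC i σ) x) =
      Finset.univ.image (fun i : Fin k => -((partialSum σ i : ℕ) : ZMod n)) ∧
    (Finset.univ.filter fun p : ZMod n =>
        ∃ i : Fin k, (realizationF n σ x).image (· + p) = realizationF n (rotC i σ) x).card
      = k := by
  rw [filter_image_add_eq_realizationF_rotC hsum]
  refine ⟨rfl, ?_⟩
  rw [card_image_of_injective univ fun a b h =>
    natCast_partialSum_injective hpos hsum (neg_injective h), card_univ, Fintype.card_fin]
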